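/- Let E be a closed aggregate atom that is anti-monotone, i.e., for all Δ ⊆ Δ′ ⊆ A, if Δ′ justifies E then Δ justifies E. Then τE is strongly equivalent to the formula obtained from τE by replacing the consequent of every implication by ⊥, i.e., to the conjunction, over all Δ ⊆ A that do not justify E, of the formulas ¬⋀_{(i,r)∈Δ} τ∨((Lᵢ)ʳ_{xᵢ}). -/

import Mathlib

namespace AG

/-! Infinitary propositional formulas (Truszczyński), satisfaction, reducts,
stable models, and strong equivalence. Conjunctions and disjunctions over
arbitrary sets of formulas are represented by (Type-valued) indexed families. -/

inductive Formula (σ : Type) : Type 1 where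
  | atom : σ → Formula σ
  | conj : (ι : Type) → (ι → Formula σ) → Formula σ
  | disj : (ι : Type) → (ι → Formula σ) → Formula σ
  | impl : Formula σ → Formula σ → Formula σ

namespace Formula

def bot {σ : Type} : Formula σ := disj Empty (fun e => e.elim)

def top {σ : Type} : Formula σ := conj Empty (fun e => e.elim)

def neg {σ : Type} (F : Formula σ) : Formula σ := impl F bot

def and {σ : Type} (F G : Formula σ) : Formula σ :=
  conj Bool (fun b => if b then F else G)

def or {σ : Type} (F G : Formula σ) : Formula σ :=
  disj Bool (fun b => if b then F else G)

end Formula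

/-- Satisfaction of an infinitary formula by an interpretation `I ⊆ σ`. -/
def Sat {σ : Type} (I : Set σ) : Formula σ → Prop
  | .atom p => p ∈ I
  | .conj _ f => ∀ i, Sat I (f i)
  | .disj _ f => ∃ i, Sat I (f i)
  | .impl F G => Sat I F → Sat I G

open Classical in
/-- The reduct `F^I` of a formula `F` with respect to an interpretation `I`. -/
noncomputable def reduct {σ : Type} (I : Set σ) : Formula σ → Formula σ
  | .atom p => if p ∈ I then .atom p else .bot
  | .conj ι f => .conj ι (fun i => reduct I (f i))
  | .disj ι f => .disj ι (fun i => reduct I (f i))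
  | .impl F G => if Sat I (.impl F G) then .impl (reduct I F) (reduct I G) else .bot

/-- `I` is a stable model of a set `H` of infinitary formulas: `I` is minimal with
respect to set inclusion among the interpretations satisfying the reducts (w.r.t. `I`)
of all formulas in `H`. -/
def IsStableModel {σ : Type} (H : Set (Formula σ)) (I : Set σ) : Prop :=
  (∀ F ∈ H, Sat I (reduct I F)) ∧
  ∀ J : Set σ, J ⊆ I → (∀ F ∈ H, Sat J (reduct I F)) → J = I

/-- Strong equivalence of infinitary formulas: `H ∪ {F}` and `H ∪ {G}` have the same
stable models for every set `H` of formulas. -/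
def StronglyEquivalent {σ : Type} (F G : Formula σ) : Prop :=
  ∀ (H : Set (Formula σ)) (I : Set σ),
    IsStableModel (insert F H) I ↔ IsStableModel (insert G H) I

/-! Terms of Abstract Gringo: numerals, the symbols `inf`/`sup`, symbolic
constants, variables, function terms, arithmetic/interval terms, and tuples. -/

inductive AGOp : Type where
  | add | sub | mul | div | interval

inductive AGTerm : Type where
  | num : ℤ → AGTerm
  | inf : AGTerm
  | sup : AGTerm
  | sym : ℕ → AGTerm
  | var : ℕ → AGTerm
  | fn : ℕ → List AGTerm → AGTerm
  | bin : AGOp → AGTerm → AGTerm → AGTerm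
  | tuple : List AGTerm → AGTerm

mutual

/-- `tval t` is the set `[t]` of values of a ground term `t`. -/
def tval : AGTerm → Set AGTerm
  | AGTerm.num n => {u | u = AGTerm.num n}
  | AGTerm.inf => {u | u = AGTerm.inf}
  | AGTerm.sup => {u | u = AGTerm.sup}
  | AGTerm.sym c => {u | u = AGTerm.sym c}
  | AGTerm.var _ => ∅
  | AGTerm.fn f ts => {u | ∃ rs ∈ tvalList ts, u = AGTerm.fn f rs}
  | AGTerm.bin AGOp.add t₁ t₂ =>
      {u | ∃ n₁ n₂ : ℤ, AGTerm.num n₁ ∈ tval t₁ ∧ AGTerm.num n₂ ∈ tval t₂ ∧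
        u = AGTerm.num (n₁ + n₂)}
  | AGTerm.bin AGOp.sub t₁ t₂ =>
      {u | ∃ n₁ n₂ : ℤ, AGTerm.num n₁ ∈ tval t₁ ∧ AGTerm.num n₂ ∈ tval t₂ ∧
        u = AGTerm.num (n₁ - n₂)}
  | AGTerm.bin AGOp.mul t₁ t₂ =>
      {u | ∃ n₁ n₂ : ℤ, AGTerm.num n₁ ∈ tval t₁ ∧ AGTerm.num n₂ ∈ tval t₂ ∧
        u = AGTerm.num (n₁ * n₂)}
  | AGTerm.bin AGOp.div t₁ t₂ =>
      {u | ∃ n₁ n₂ : ℤ, AGTerm.num n₁ ∈ tval t₁ ∧ AGTerm.num n₂ ∈ tval t₂ ∧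
        n₂ ≠ 0 ∧ u = AGTerm.num (Int.fdiv n₁ n₂)}
  | AGTerm.bin AGOp.interval t₁ t₂ =>
      {u | ∃ m n₁ n₂ : ℤ, AGTerm.num n₁ ∈ tval t₁ ∧ AGTerm.num n₂ ∈ tval t₂ ∧
        n₁ ≤ m ∧ m ≤ n₂ ∧ u = AGTerm.num m}
  | AGTerm.tuple ts => {u | ∃ rs ∈ tvalList ts, u = AGTerm.tuple rs}

/-- `tvalList ts` is the set `[t]` of values of a tuple `t` of ground terms
(componentwise evaluation). -/
def tvalList : List AGTerm → Set (List AGTerm)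
  | [] => {l | l = []}
  | t :: ts => {l | ∃ r ∈ tval t, ∃ rs ∈ tvalList ts, l = r :: rs}

end

/-- A term is ground if it contains no variables. -/
inductive Ground : AGTerm → Prop where
  | num (n : ℤ) : Ground (AGTerm.num n)
  | inf : Ground AGTerm.inf
  | sup : Ground AGTerm.sup
  | sym (c : ℕ) : Ground (AGTerm.sym c)
  | fn (f : ℕ) (ts : List AGTerm) : (∀ t ∈ ts, Ground t) → Ground (AGTerm.fn f ts)
  | bin (o : AGOp) (t₁ t₂ : AGTerm) :
      Ground t₁ → Ground t₂ → Ground (AGTerm.bin o t₁ t₂)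
  | tuple (ts : List AGTerm) : (∀ t ∈ ts, Ground t) → Ground (AGTerm.tuple ts)

/-- A term is precomputed if it contains neither variables nor the symbols
`+ - × / ..`. -/
inductive Precomputed : AGTerm → Prop where
  | num (n : ℤ) : Precomputed (AGTerm.num n)
  | inf : Precomputed AGTerm.inf
  | sup : Precomputed AGTerm.sup
  | sym (c : ℕ) : Precomputed (AGTerm.sym c)
  | fn (f : ℕ) (ts : List AGTerm) :
      (∀ t ∈ ts, Precomputed t) → Precomputed (AGTerm.fn f ts)
  | tuple (ts : List AGTerm) :
      (∀ t ∈ ts, Precomputed t) → Precomputed (AGTerm.tuple ts)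

/-- A term is interval-free if it does not contain the symbol `..`. -/
inductive IntervalFree : AGTerm → Prop where
  | num (n : ℤ) : IntervalFree (AGTerm.num n)
  | inf : IntervalFree AGTerm.inf
  | sup : IntervalFree AGTerm.sup
  | sym (c : ℕ) : IntervalFree (AGTerm.sym c)
  | var (v : ℕ) : IntervalFree (AGTerm.var v)
  | fn (f : ℕ) (ts : List AGTerm) :
      (∀ t ∈ ts, IntervalFree t) → IntervalFree (AGTerm.fn f ts)
  | bin (o : AGOp) (t₁ t₂ : AGTerm) : o ≠ AGOp.interval →
      IntervalFree t₁ → IntervalFree t₂ → IntervalFree (AGTerm.bin o t₁ t₂)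
  | tuple (ts : List AGTerm) :
      (∀ t ∈ ts, IntervalFree t) → IntervalFree (AGTerm.tuple ts)

/-- The variable `v` occurs in the term. -/
inductive VarOccurs (v : ℕ) : AGTerm → Prop where
  | var : VarOccurs v (AGTerm.var v)
  | fn {f : ℕ} {ts : List AGTerm} {t : AGTerm} :
      t ∈ ts → VarOccurs v t → VarOccurs v (AGTerm.fn f ts)
  | binLeft {o : AGOp} {t₁ t₂ : AGTerm} :
      VarOccurs v t₁ → VarOccurs v (AGTerm.bin o t₁ t₂)
  | binRight {o : AGOp} {t₁ t₂ : AGTerm} :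
      VarOccurs v t₂ → VarOccurs v (AGTerm.bin o t₁ t₂)
  | tuple {ts : List AGTerm} {t : AGTerm} :
      t ∈ ts → VarOccurs v t → VarOccurs v (AGTerm.tuple ts)

/-- The substitution mapping the variables in the list `xs` to the corresponding
members of the list `rs` (and every other variable to itself). -/
def assign (xs : List ℕ) (rs : List AGTerm) (v : ℕ) : AGTerm :=
  ((xs.zip rs).lookup v).getD (AGTerm.var v)

/-- Applying a substitution to a term. -/
def subst (ρ : ℕ → AGTerm) : AGTerm → AGTerm
  | AGTerm.num n => AGTerm.num n
  | AGTerm.inf => AGTerm.inf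
  | AGTerm.sup => AGTerm.sup
  | AGTerm.sym c => AGTerm.sym c
  | AGTerm.var v => ρ v
  | AGTerm.fn f ts => AGTerm.fn f (ts.attach.map (fun x => subst ρ x.1))
  | AGTerm.bin o t₁ t₂ => AGTerm.bin o (subst ρ t₁) (subst ρ t₂)
  | AGTerm.tuple ts => AGTerm.tuple (ts.attach.map (fun x => subst ρ x.1))
termination_by t => sizeOf t
decreasing_by
  all_goals simp_wf
  all_goals try (cases x; simp_all)
  all_goals first
    | (rename_i hmem; have := List.sizeOf_lt_of_mem hmem; omega)
    | omega

/-- Tuples of precomputed terms of length `k`. -/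
def PTuple (k : ℕ) : Type :=
  {r : List AGTerm // r.length = k ∧ ∀ u ∈ r, Precomputed u}

/-- The data of the aggregate elements `t₁ : L₁ ; … ; tₙ : Lₙ` of an aggregate
atom: for each `i`, the list `xᵢ` of variables of `tᵢ : Lᵢ`, the tuple `tᵢ` of
terms, and the function sending a tuple `r` of precomputed terms (to be
substituted for `xᵢ`) to the infinitary formula `τ∨((Lᵢ)ʳ_{xᵢ})`. -/
structure AggAtom (σ : Type) where
  n : ℕ
  x : Fin n → List ℕ
  t : Fin n → List AGTerm
  L : (i : Fin n) → List AGTerm → Formula σ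

/-- The index set `A = {(i, r) : 1 ≤ i ≤ n, r ∈ Aᵢ}`, where `Aᵢ` is the set of
tuples of precomputed terms of the same length as `xᵢ`. -/
def Idx {σ : Type} (E : AggAtom σ) : Type :=
  Σ i : Fin E.n, PTuple (E.x i).length

/-- `[(tᵢ)ʳ_{xᵢ}]` for `a = (i, r) ∈ A`. -/
def elemVal {σ : Type} (E : AggAtom σ) (a : Idx E) : Set (List AGTerm) :=
  tvalList ((E.t a.1).map (subst (assign (E.x a.1) a.2.1)))

/-- `[Δ]`: the union of the sets `[(tᵢ)ʳ_{xᵢ}]` over `(i, r) ∈ Δ`. -/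
def deltaVal {σ : Type} (E : AggAtom σ) (Δ : Set (Idx E)) : Set (List AGTerm) :=
  ⋃ a ∈ Δ, elemVal E a

/-- `τ∨((Lᵢ)ʳ_{xᵢ})` for `a = (i, r) ∈ A`. -/
def fml {σ : Type} (E : AggAtom σ) (a : Idx E) : Formula σ :=
  E.L a.1 a.2.1

/-- `Δ` justifies the aggregate atom `α{t₁ : L₁ ; … ; tₙ : Lₙ} ≺ s`: the
relation `cmp` (the one denoted by `≺`) holds between `α̂[Δ]` and at least one
precomputed term `u ∈ [s]`. -/
def Justifies {σ : Type} (E : AggAtom σ) (alphaHat : Set (List AGTerm) → AGTerm)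
    (cmp : AGTerm → AGTerm → Prop) (s : AGTerm) (Δ : Set (Idx E)) : Prop :=
  ∃ u ∈ tval s, cmp (alphaHat (deltaVal E Δ)) u

/-- `τE`: the conjunction, over all `Δ ⊆ A` that do not justify `E`, of the
implications `⋀_{(i,r)∈Δ} τ∨((Lᵢ)ʳ_{xᵢ}) → ⋁_{(i,r)∈A∖Δ} τ∨((Lᵢ)ʳ_{xᵢ})`. -/
def tauAgg {σ : Type} (E : AggAtom σ) (justifies : Set (Idx E) → Prop) :
    Formula σ :=
  Formula.conj {Δ : Set (Idx E) // ¬ justifies Δ} (fun Δ =>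
    Formula.impl
      (Formula.conj {a : Idx E // a ∈ Δ.1} (fun a => fml E a.1))
      (Formula.disj {a : Idx E // a ∉ Δ.1} (fun a => fml E a.1)))

/-! Under the reduct with respect to `I`, both formulas become satisfied by every `J` exactly
when `I` falsifies each antecedent `⋀_{a∈Δ} fml a` with `Δ` non-justifying. For the negated
form this is immediate. For `τE`, if `I` satisfied such an antecedent, then `Δ` would lie in
`Δ* = {a | I ⊨ fml a}`, which by anti-monotonicity does not justify `E` either; but the
implication indexed by `Δ*` is false in `I`, since its antecedent holds and every disjunct of
its consequent fails. Formulas whose reducts have the same models are strongly equivalent. -/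

section Reduct

variable {σ : Type}

theorem not_sat_bot (I : Set σ) : ¬ Sat I Formula.bot :=
  fun ⟨e, _⟩ => e.elim

theorem sat_of_sat_reduct {I J : Set σ} {F : Formula σ} (h : Sat J (reduct I F)) : Sat I F := by
  induction F with
  | atom p =>
    rw [reduct] at h
    split at h
    · assumption
    · exact absurd h (not_sat_bot J)
  | conj ι f ih => exact fun i => ih i (h i)
  | disj ι f ih =>
    obtain ⟨i, hi⟩ := h
    exact ⟨i, ih i hi⟩
  | impl F G _ _ =>
    rw [reduct] at h
    split at h
    · assumption
    · exact absurd h (not_sat_bot J)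

theorem sat_reduct_impl_of_not_sat {I J : Set σ} {F : Formula σ} (G : Formula σ)
    (hF : ¬ Sat I F) : Sat J (reduct I (.impl F G)) := by
  rw [reduct, if_pos (show Sat I (.impl F G) from fun h => absurd h hF)]
  exact fun h => absurd (sat_of_sat_reduct h) hF

theorem sat_reduct_neg_iff {I J : Set σ} {F : Formula σ} :
    Sat J (reduct I F.neg) ↔ ¬ Sat I F :=
  ⟨fun h hF => not_sat_bot I (sat_of_sat_reduct h hF), sat_reduct_impl_of_not_sat _⟩

theorem sat_reduct_conj_neg_iff {I J : Set σ} {ι : Type} {F : ι → Formula σ} :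
    Sat J (reduct I (.conj ι fun i => (F i).neg)) ↔ ∀ i, ¬ Sat I (F i) :=
  forall_congr' fun _ => sat_reduct_neg_iff

theorem sat_reduct_conj_impl_of_forall_not_sat {I J : Set σ} {ι : Type}
    {F G : ι → Formula σ} (hF : ∀ i, ¬ Sat I (F i)) :
    Sat J (reduct I (.conj ι fun i => .impl (F i) (G i))) :=
  fun i => sat_reduct_impl_of_not_sat (G i) (hF i)

theorem IsStableModel.of_sat_reduct_imp {F G : Formula σ}
    (h : ∀ I J : Set σ, Sat J (reduct I F) ↔ Sat J (reduct I G)) {H : Set (Formula σ)}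
    {I : Set σ} (hI : IsStableModel (insert F H) I) : IsStableModel (insert G H) I := by
  obtain ⟨hsat, hmin⟩ := hI
  refine ⟨?_, fun J hJI hJ => hmin J hJI ?_⟩
  · rintro K (rfl | hK)
    · exact (h I I).mp (hsat F (Set.mem_insert _ _))
    · exact hsat K (Set.mem_insert_of_mem _ hK)
  · rintro K (rfl | hK)
    · exact (h I J).mpr (hJ G (Set.mem_insert _ _))
    · exact hJ K (Set.mem_insert_of_mem _ hK)

theorem StronglyEquivalent.of_sat_reduct_iff {F G : Formula σ}
    (h : ∀ I J : Set σ, Sat J (reduct I F) ↔ Sat J (reduct I G)) : StronglyEquivalent F G :=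
  fun _ _ => ⟨IsStableModel.of_sat_reduct_imp h,
    IsStableModel.of_sat_reduct_imp fun I J => (h I J).symm⟩

end Reduct

theorem not_sat_conj_of_sat_tauAgg {σ : Type} {E : AggAtom σ} {justifies : Set (Idx E) → Prop}
    (hanti : ∀ Δ Δ' : Set (Idx E), Δ ⊆ Δ' → justifies Δ' → justifies Δ) {I : Set σ}
    (hI : Sat I (tauAgg E justifies)) (Δ : {Δ : Set (Idx E) // ¬ justifies Δ}) :
    ¬ Sat I (.conj {a : Idx E // a ∈ Δ.1} fun a => fml E a.1) := by
  intro hΔ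
  let Δstar : Set (Idx E) := {a | Sat I (fml E a)}
  have hsub : Δ.1 ⊆ Δstar := fun a ha => hΔ ⟨a, ha⟩
  obtain ⟨⟨a, ha⟩, hsat⟩ :=
    hI ⟨Δstar, fun hj => Δ.2 (hanti _ _ hsub hj)⟩ fun a => a.2
  exact ha hsat

/-- **Anti-monotone aggregate atoms.**
If a closed aggregate atom `E` is anti-monotone (whenever `Δ ⊆ Δ' ⊆ A` and `Δ'`
justifies `E`, so does `Δ`), then `τE` is strongly equivalent to the formula
obtained from `τE` by replacing the consequent of every implication by `⊥`. -/
theorem antimonotone_bot_consequents {σ : Type} (E : AggAtom σ)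
    (hclosed : ∀ i : Fin E.n, ∀ u ∈ E.t i, ∀ v : ℕ, VarOccurs v u → v ∈ E.x i)
    (alphaHat : Set (List AGTerm) → AGTerm)
    (cmp : AGTerm → AGTerm → Prop) (s : AGTerm) (hground : Ground s)
    (hanti : ∀ Δ Δ' : Set (Idx E), Δ ⊆ Δ' →
      Justifies E alphaHat cmp s Δ' → Justifies E alphaHat cmp s Δ) :
    StronglyEquivalent
      (tauAgg E (Justifies E alphaHat cmp s))
      (Formula.conj {Δ : Set (Idx E) // ¬ Justifies E alphaHat cmp s Δ}
        (fun Δ => Formula.neg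
          (Formula.conj {a : Idx E // a ∈ Δ.1} (fun a => fml E a.1)))) :=
  StronglyEquivalent.of_sat_reduct_iff fun _ _ =>
    ⟨fun h => sat_reduct_conj_neg_iff.mpr (not_sat_conj_of_sat_tauAgg hanti (sat_of_sat_reduct h)),
      fun h => sat_reduct_conj_impl_of_forall_not_sat (sat_reduct_conj_neg_iff.mp h)⟩

end AG
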